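/- Assume additionally that |∇F(x)| ≤ C_F for all x ∈ ℝ^d. Fix T > 0, τ > 0, a probability measure μ₀ on ℝ^d with finite first moment, and a continuous g : [0,T] → ℝ^d with g(0) = 0. Then there exists a constant C > 0, depending only on L_V, L_F, C_F, T and τ, such that for all t₁, t₂ ∈ [τ, ∞) and all x₁, x₂ ∈ ℝ^d, the solutions f₁, f₂ of f_i(t) = x_i − ∫₀ᵗ ∇V(f_i(s)) ds − ∫₀ᵗ (t_i/(t_i+s))·∇F*μ₀(f_i(s)) ds − ∫₀ᵗ (1/(t_i+s))·∫₀ˢ ∇F(f_i(s)−f_i(u)) du ds + g(t) satisfy sup_{t∈[0,T]} |f₁(t)−f₂(t)| ≤ C·(|x₁−x₂| + |t₁−t₂|). -/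

import Mathlib

open MeasureTheory Set

noncomputable section

abbrev Ed (d : ℕ) : Type := EuclideanSpace ℝ (Fin d)

/-- `f` is a continuous solution on `[0,T]` of the integral equation for the
generalized self-interacting diffusion with initial data `(t₀, μ₀, x₀)` and forcing `g`. -/
def IsSIDSolution {d : ℕ} (V F : Ed d → ℝ) (T t₀ : ℝ) (μ₀ : Measure (Ed d))
    (x₀ : Ed d) (g : ℝ → Ed d) (f : ℝ → Ed d) : Prop :=
  ContinuousOn f (Icc 0 T) ∧
  ∀ t ∈ Icc (0:ℝ) T,
    f t = x₀ - (∫ s in (0:ℝ)..t, gradient V (f s))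
      - (∫ s in (0:ℝ)..t, (t₀ / (t₀ + s)) • (∫ u, gradient F (f s - u) ∂μ₀))
      - (∫ s in (0:ℝ)..t, (1 / (t₀ + s)) • (∫ u in (0:ℝ)..s, gradient F (f s - f u)))
      + g t

/-!
The difference `h = ‖f₁ - f₂‖` of two solutions satisfies
`h t ≤ ‖x₁ - x₂‖ + M |t₁ - t₂| + K ∫₀ᵗ h`: the confinement drift and the interaction with `μ₀`
are Lipschitz in the position, the self-interaction term is Lipschitz in both `f s` and `f u`,
and the time weights `t₀ / (t₀ + s)`, `1 / (t₀ + s)` move by `O(|t₁ - t₂| / τ²)` while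
multiplying quantities bounded through `C_F`. Grönwall's inequality then bounds `h` by
`(‖x₁ - x₂‖ + M |t₁ - t₂|) exp (K T)`.
-/

theorem abs_one_div_sub_one_div_le {τ a b : ℝ} (hτ : 0 < τ) (ha : τ ≤ a) (hb : τ ≤ b) :
    |1 / a - 1 / b| ≤ |a - b| / τ ^ 2 := by
  have ha₀ : 0 < a := hτ.trans_le ha
  have hb₀ : 0 < b := hτ.trans_le hb
  rw [div_sub_div _ _ ha₀.ne' hb₀.ne', abs_div, abs_of_pos (mul_pos ha₀ hb₀), one_mul, mul_one,
    abs_sub_comm]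
  exact div_le_div_of_nonneg_left (abs_nonneg _) (by positivity)
    (by rw [sq]; exact mul_le_mul ha hb hτ.le ha₀.le)

theorem abs_div_add_sub_div_add_le {τ t₁ t₂ s : ℝ} (hτ : 0 < τ) (h₁ : τ ≤ t₁) (h₂ : τ ≤ t₂)
    (hs : 0 ≤ s) : |t₁ / (t₁ + s) - t₂ / (t₂ + s)| ≤ s * (|t₁ - t₂| / τ ^ 2) := by
  have h₁' : τ ≤ t₁ + s := by linarith
  have h₂' : τ ≤ t₂ + s := by linarith
  have key : t₁ / (t₁ + s) - t₂ / (t₂ + s) = s * (1 / (t₂ + s) - 1 / (t₁ + s)) := by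
    field_simp [(hτ.trans_le h₁').ne', (hτ.trans_le h₂').ne']
    ring
  rw [key, abs_mul, abs_of_nonneg hs]
  gcongr
  simpa only [add_sub_add_right_eq_sub, abs_sub_comm t₂ t₁] using
    abs_one_div_sub_one_div_le hτ h₂' h₁'

theorem le_mul_exp_of_le_add_mul_integral {u : ℝ → ℝ} {a b ε K : ℝ}
    (hu : ContinuousOn u (Icc a b)) (hK : 0 ≤ K)
    (hle : ∀ t ∈ Icc a b, u t ≤ ε + K * ∫ s in a..t, u s) :
    ∀ t ∈ Icc a b, u t ≤ ε * Real.exp (K * (t - a)) := by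
  -- `φ = ∫ u` has right derivative `u ≤ ε + K φ`, so the differential Grönwall bound applies to it.
  set φ : ℝ → ℝ := fun t => ∫ s in a..t, u s
  have hderiv : ∀ x ∈ Icc a b, HasDerivWithinAt φ (u x) (Icc a b) x := by
    intro x hx
    have : Fact (x ∈ Icc a b) := ⟨hx⟩
    have hab : a ≤ b := hx.1.trans hx.2
    exact intervalIntegral.integral_hasDerivWithinAt_right
      ((hu.mono (uIcc_subset_Icc (left_mem_Icc.2 hab) hx)).intervalIntegrable)
      (hu.stronglyMeasurableAtFilter_nhdsWithin measurableSet_Icc x) (hu x hx)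
  have hφ : ∀ t ∈ Icc a b, φ t ≤ gronwallBound 0 K ε (t - a) := by
    refine le_gronwallBound_of_liminf_deriv_right_le (f' := u)
      (fun x hx => (hderiv x hx).continuousWithinAt) (fun x hx r hr => ?_)
      (by simp [φ]) (fun x hx => by linarith [hle x (Ico_subset_Icc_self hx)])
    refine ((hderiv x (Ico_subset_Icc_self hx)).mono_of_mem_nhdsWithin ?_).liminf_right_slope_le hr
    exact Filter.mem_of_superset (Icc_mem_nhdsGE hx.2) (Icc_subset_Icc_left hx.1)
  intro t ht
  have hexp : ε + K * gronwallBound 0 K ε (t - a) = ε * Real.exp (K * (t - a)) := by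
    rcases hK.eq_or_lt with rfl | hK₀
    · simp
    · rw [gronwallBound_of_K_ne_0 hK₀.ne']
      field_simp
      ring
  calc u t ≤ ε + K * φ t := hle t ht
    _ ≤ ε + K * gronwallBound 0 K ε (t - a) := by gcongr; exact hφ t ht
    _ = ε * Real.exp (K * (t - a)) := hexp

theorem continuous_of_norm_sub_le_mul {E F : Type*} [SeminormedAddCommGroup E]
    [SeminormedAddCommGroup F] {f : E → F} {L : ℝ} (h : ∀ x y, ‖f x - f y‖ ≤ L * ‖x - y‖) :
    Continuous f :=
  (LipschitzWith.of_dist_le' (by simpa only [dist_eq_norm] using h)).continuous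

theorem integrable_comp_sub_of_norm_le {E : Type*} [NormedAddCommGroup E] [MeasurableSpace E]
    [BorelSpace E] [SecondCountableTopology E] {k : E → E} {C : ℝ} {μ : Measure E}
    [IsFiniteMeasure μ] (hk : Continuous k) (hC : ∀ x, ‖k x‖ ≤ C) (x : E) :
    Integrable (fun u => k (x - u)) μ :=
  Integrable.of_bound (hk.comp (continuous_const.sub continuous_id)).aestronglyMeasurable C
    (Filter.Eventually.of_forall fun u => hC (x - u))

section Interaction

variable {E : Type*} [NormedAddCommGroup E] [NormedSpace ℝ E] {k : E → E} {L C : ℝ}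

theorem norm_smul_sub_smul_le (a b : ℝ) (x y : E) :
    ‖a • x - b • y‖ ≤ |a| * ‖x - y‖ + |a - b| * ‖y‖ :=
  calc ‖a • x - b • y‖ = ‖a • (x - y) + (a - b) • y‖ := by
        rw [smul_sub, sub_smul, sub_add_sub_cancel]
    _ ≤ ‖a • (x - y)‖ + ‖(a - b) • y‖ := norm_add_le _ _
    _ = |a| * ‖x - y‖ + |a - b| * ‖y‖ := by
        rw [norm_smul, norm_smul, Real.norm_eq_abs, Real.norm_eq_abs]

theorem norm_intervalIntegral_le_mul_integral_add {F : ℝ → E} {h : ℝ → ℝ} {α β a b : ℝ}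
    (hab : a ≤ b) (hh : IntervalIntegrable h volume a b) (hF : ∀ s ∈ Icc a b, ‖F s‖ ≤ α * h s + β) :
    ‖∫ s in a..b, F s‖ ≤ α * (∫ s in a..b, h s) + β * (b - a) := by
  calc ‖∫ s in a..b, F s‖ ≤ ∫ s in a..b, (α * h s + β) :=
        intervalIntegral.norm_integral_le_of_norm_le hab
          (Filter.Eventually.of_forall fun s hs => hF s (Ioc_subset_Icc_self hs))
          ((hh.const_mul α).add intervalIntegrable_const)
    _ = α * (∫ s in a..b, h s) + β * (b - a) := by
        rw [intervalIntegral.integral_add (hh.const_mul α) intervalIntegrable_const,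
          intervalIntegral.integral_const_mul, intervalIntegral.integral_const, smul_eq_mul,
          mul_comm β]

def selfInteraction (k : E → E) (f : ℝ → E) (s : ℝ) : E :=
  ∫ u in (0 : ℝ)..s, k (f s - f u)

theorem continuousOn_selfInteraction {f : ℝ → E} {T : ℝ} (hk : Continuous k)
    (hf : ContinuousOn f (Icc 0 T)) : ContinuousOn (selfInteraction k f) (Icc 0 T) := by
  rcases lt_or_ge T 0 with hT | hT
  · simp [Icc_eq_empty_of_lt hT]
  set g : ℝ → E := fun s => f (projIcc 0 T hT s)
  have hg : Continuous g :=
    hf.comp_continuous (continuous_subtype_val.comp continuous_projIcc) fun s =>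
      (projIcc 0 T hT s).2
  have hgf : EqOn g f (Icc 0 T) := fun s hs => by simp [g, projIcc_of_mem hT hs]
  have hcont : Continuous fun s => ∫ u in (0 : ℝ)..s, k (g s - g u) :=
    intervalIntegral.continuous_parametric_intervalIntegral_of_continuous
      (f := fun s u => k (g s - g u)) (by fun_prop) continuous_id
  refine hcont.continuousOn.congr fun s hs => ?_
  refine intervalIntegral.integral_congr fun u hu => ?_
  simp only [hgf hs, hgf (uIcc_subset_Icc (left_mem_Icc.2 hT) hs hu)]

theorem norm_selfInteraction_le {f : ℝ → E} {s : ℝ} (hC : ∀ x, ‖k x‖ ≤ C) (hs : 0 ≤ s) :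
    ‖selfInteraction k f s‖ ≤ C * s := by
  simpa [selfInteraction, abs_of_nonneg hs] using
    intervalIntegral.norm_integral_le_of_norm_le_const (a := 0) (b := s) fun u _ => hC (f s - f u)

theorem norm_selfInteraction_sub_le {f₁ f₂ : ℝ → E} {s : ℝ}
    (hk : ∀ x y, ‖k x - k y‖ ≤ L * ‖x - y‖) (hL : 0 ≤ L) (hs : 0 ≤ s)
    (hf₁ : ContinuousOn f₁ (Icc 0 s)) (hf₂ : ContinuousOn f₂ (Icc 0 s)) :
    ‖selfInteraction k f₁ s - selfInteraction k f₂ s‖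
      ≤ L * (s * ‖f₁ s - f₂ s‖ + ∫ u in (0 : ℝ)..s, ‖f₁ u - f₂ u‖) := by
  have hint : ∀ f : ℝ → E, ContinuousOn f (Icc 0 s) →
      IntervalIntegrable (fun u => k (f s - f u)) volume 0 s := fun f hf =>
    ((continuous_of_norm_sub_le_mul hk).comp_continuousOn
      (continuousOn_const.sub hf)).intervalIntegrable_of_Icc hs
  have hpt : ∀ u ∈ Icc 0 s, ‖k (f₁ s - f₁ u) - k (f₂ s - f₂ u)‖
      ≤ L * ‖f₁ u - f₂ u‖ + L * ‖f₁ s - f₂ s‖ := fun u _ =>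
    calc _ ≤ L * ‖(f₁ s - f₂ s) - (f₁ u - f₂ u)‖ := by
          simpa only [sub_sub_sub_comm] using hk (f₁ s - f₁ u) (f₂ s - f₂ u)
      _ ≤ L * ‖f₁ u - f₂ u‖ + L * ‖f₁ s - f₂ s‖ := by
          rw [← mul_add, add_comm]; exact mul_le_mul_of_nonneg_left (norm_sub_le _ _) hL
  rw [selfInteraction, selfInteraction,
    ← intervalIntegral.integral_sub (hint f₁ hf₁) (hint f₂ hf₂)]
  calc _ ≤ L * (∫ u in (0 : ℝ)..s, ‖f₁ u - f₂ u‖) + L * ‖f₁ s - f₂ s‖ * (s - 0) :=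
        norm_intervalIntegral_le_mul_integral_add hs
          ((hf₁.sub hf₂).norm.intervalIntegrable_of_Icc hs) hpt
    _ = _ := by ring

variable [MeasurableSpace E]

def convMeasure (k : E → E) (μ : Measure E) (x : E) : E :=
  ∫ u, k (x - u) ∂μ

/-- With `b = ∇V` and `k = ∇F`, the integrand of the equation in `IsSIDSolution`, so that a
solution is `f t = x₀ - ∫₀ᵗ sidField … f s ds + g t`. -/
def sidField (b k : E → E) (t₀ : ℝ) (μ : Measure E) (f : ℝ → E) (s : ℝ) : E :=
  b (f s) + (t₀ / (t₀ + s)) • convMeasure k μ (f s) + (1 / (t₀ + s)) • selfInteraction k f s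

variable (μ : Measure E) [IsProbabilityMeasure μ]

theorem norm_convMeasure_le (hC : ∀ x, ‖k x‖ ≤ C) (x : E) : ‖convMeasure k μ x‖ ≤ C := by
  simpa [convMeasure] using norm_integral_le_of_norm_le_const (μ := μ)
    (Filter.Eventually.of_forall fun u => hC (x - u))

variable [BorelSpace E] [SecondCountableTopology E]

theorem norm_convMeasure_sub_le (hk : ∀ x y, ‖k x - k y‖ ≤ L * ‖x - y‖) (hC : ∀ x, ‖k x‖ ≤ C)
    (x y : E) : ‖convMeasure k μ x - convMeasure k μ y‖ ≤ L * ‖x - y‖ := by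
  have hk' := continuous_of_norm_sub_le_mul hk
  rw [convMeasure, convMeasure, ← integral_sub (integrable_comp_sub_of_norm_le hk' hC x)
    (integrable_comp_sub_of_norm_le hk' hC y)]
  simpa using norm_integral_le_of_norm_le_const (μ := μ) (Filter.Eventually.of_forall fun u => by
    simpa only [sub_sub_sub_cancel_right] using hk (x - u) (y - u))

theorem continuous_convMeasure (hk : ∀ x y, ‖k x - k y‖ ≤ L * ‖x - y‖) (hC : ∀ x, ‖k x‖ ≤ C) :
    Continuous (convMeasure k μ) :=
  continuous_of_norm_sub_le_mul (norm_convMeasure_sub_le μ hk hC)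

variable {b : E → E} {Lb τ t₀ t₁ t₂ s T : ℝ} {f f₁ f₂ : ℝ → E}

theorem norm_sidField_sub_le (hb : ∀ x y, ‖b x - b y‖ ≤ Lb * ‖x - y‖)
    (hk : ∀ x y, ‖k x - k y‖ ≤ L * ‖x - y‖) (hL : 0 ≤ L) (hC : ∀ x, ‖k x‖ ≤ C) (hτ : 0 < τ)
    (h₁ : τ ≤ t₁) (h₂ : τ ≤ t₂) (hs : 0 ≤ s) (hf₁ : ContinuousOn f₁ (Icc 0 s))
    (hf₂ : ContinuousOn f₂ (Icc 0 s)) :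
    ‖sidField b k t₁ μ f₁ s - sidField b k t₂ μ f₂ s‖
      ≤ (Lb + L + L * s / τ) * ‖f₁ s - f₂ s‖ + L / τ * (∫ u in (0 : ℝ)..s, ‖f₁ u - f₂ u‖)
        + 2 * C * s / τ ^ 2 * |t₁ - t₂| := by
  have hτs₁ : τ ≤ t₁ + s := by linarith
  have hτs₂ : τ ≤ t₂ + s := by linarith
  have hpos₁ : 0 < t₁ + s := hτ.trans_le hτs₁
  have hconv : ‖(t₁ / (t₁ + s)) • convMeasure k μ (f₁ s) - (t₂ / (t₂ + s)) • convMeasure k μ (f₂ s)‖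
      ≤ 1 * (L * ‖f₁ s - f₂ s‖) + s * (|t₁ - t₂| / τ ^ 2) * C := by
    refine (norm_smul_sub_smul_le _ _ _ _).trans (add_le_add ?_ ?_)
    · have hcoef : |t₁ / (t₁ + s)| ≤ 1 := by
        rw [abs_of_pos (div_pos (hτ.trans_le h₁) hpos₁)]
        exact div_le_one_of_le₀ (by linarith) hpos₁.le
      exact mul_le_mul hcoef (norm_convMeasure_sub_le μ hk hC _ _) (norm_nonneg _) zero_le_one
    · exact mul_le_mul (abs_div_add_sub_div_add_le hτ h₁ h₂ hs) (norm_convMeasure_le μ hC _)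
        (norm_nonneg _) (by positivity)
  have hself : ‖(1 / (t₁ + s)) • selfInteraction k f₁ s - (1 / (t₂ + s)) • selfInteraction k f₂ s‖
      ≤ 1 / τ * (L * (s * ‖f₁ s - f₂ s‖ + ∫ u in (0 : ℝ)..s, ‖f₁ u - f₂ u‖))
        + |t₁ - t₂| / τ ^ 2 * (C * s) := by
    refine (norm_smul_sub_smul_le _ _ _ _).trans (add_le_add ?_ ?_)
    · have hcoef : |1 / (t₁ + s)| ≤ 1 / τ := by
        rw [abs_of_pos (one_div_pos.2 hpos₁)]
        exact one_div_le_one_div_of_le hτ hτs₁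
      exact mul_le_mul hcoef (norm_selfInteraction_sub_le hk hL hs hf₁ hf₂) (norm_nonneg _)
        (by positivity)
    · have hcoef : |1 / (t₁ + s) - 1 / (t₂ + s)| ≤ |t₁ - t₂| / τ ^ 2 := by
        simpa only [add_sub_add_right_eq_sub] using abs_one_div_sub_one_div_le hτ hτs₁ hτs₂
      exact mul_le_mul hcoef (norm_selfInteraction_le hC hs) (norm_nonneg _) (by positivity)
  calc ‖sidField b k t₁ μ f₁ s - sidField b k t₂ μ f₂ s‖
      = ‖(b (f₁ s) - b (f₂ s))
          + ((t₁ / (t₁ + s)) • convMeasure k μ (f₁ s) - (t₂ / (t₂ + s)) • convMeasure k μ (f₂ s))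
          + ((1 / (t₁ + s)) • selfInteraction k f₁ s
            - (1 / (t₂ + s)) • selfInteraction k f₂ s)‖ := by
        simp only [sidField]; congr 1; abel
    _ ≤ Lb * ‖f₁ s - f₂ s‖ + (1 * (L * ‖f₁ s - f₂ s‖) + s * (|t₁ - t₂| / τ ^ 2) * C)
          + (1 / τ * (L * (s * ‖f₁ s - f₂ s‖ + ∫ u in (0 : ℝ)..s, ‖f₁ u - f₂ u‖))
            + |t₁ - t₂| / τ ^ 2 * (C * s)) :=
        norm_add₃_le.trans (add_le_add (add_le_add (hb _ _) hconv) hself)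
    _ = _ := by ring

theorem continuousOn_sidField_terms (hb : Continuous b) (hk : ∀ x y, ‖k x - k y‖ ≤ L * ‖x - y‖)
    (hC : ∀ x, ‖k x‖ ≤ C) (ht₀ : 0 < t₀) (hf : ContinuousOn f (Icc 0 T)) :
    ContinuousOn (fun s => b (f s)) (Icc 0 T) ∧
      ContinuousOn (fun s => (t₀ / (t₀ + s)) • convMeasure k μ (f s)) (Icc 0 T) ∧
      ContinuousOn (fun s => (1 / (t₀ + s)) • selfInteraction k f s) (Icc 0 T) := by
  have hcoef : ∀ c : ℝ, ContinuousOn (fun s : ℝ => c / (t₀ + s)) (Icc 0 T) := fun c =>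
    continuousOn_const.div (continuousOn_const.add continuousOn_id) fun s hs =>
      (add_pos_of_pos_of_nonneg ht₀ hs.1).ne'
  exact ⟨hb.comp_continuousOn hf,
    (hcoef t₀).smul ((continuous_convMeasure μ hk hC).comp_continuousOn hf),
    (hcoef 1).smul (continuousOn_selfInteraction (continuous_of_norm_sub_le_mul hk) hf)⟩

theorem continuousOn_sidField (hb : Continuous b) (hk : ∀ x y, ‖k x - k y‖ ≤ L * ‖x - y‖)
    (hC : ∀ x, ‖k x‖ ≤ C) (ht₀ : 0 < t₀) (hf : ContinuousOn f (Icc 0 T)) :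
    ContinuousOn (sidField b k t₀ μ f) (Icc 0 T) :=
  let ⟨h₁, h₂, h₃⟩ := continuousOn_sidField_terms μ hb hk hC ht₀ hf
  (h₁.add h₂).add h₃

end Interaction

section Solutions

variable {d : ℕ} {V F : Ed d → ℝ} {LV LF CF T τ t₀ t₁ t₂ : ℝ} {μ₀ : Measure (Ed d)}
  [IsProbabilityMeasure μ₀] {x₀ x₁ x₂ : Ed d} {g f f₁ f₂ : ℝ → Ed d}

theorem IsSIDSolution.eq_sub_integral_sidField (hsol : IsSIDSolution V F T t₀ μ₀ x₀ g f)
    (hV : Continuous (gradient V))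
    (hFlip : ∀ x y : Ed d, ‖gradient F x - gradient F y‖ ≤ LF * ‖x - y‖)
    (hFbdd : ∀ x : Ed d, ‖gradient F x‖ ≤ CF) (ht₀ : 0 < t₀) {t : ℝ} (ht : t ∈ Icc 0 T) :
    f t = x₀ - (∫ s in (0 : ℝ)..t, sidField (gradient V) (gradient F) t₀ μ₀ f s) + g t := by
  obtain ⟨hA, hB, hC⟩ := continuousOn_sidField_terms μ₀ hV hFlip hFbdd ht₀ hsol.1
  have hsub : Icc 0 t ⊆ Icc 0 T := Icc_subset_Icc_right ht.2
  have iA : IntervalIntegrable _ volume 0 t := (hA.mono hsub).intervalIntegrable_of_Icc ht.1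
  have iB : IntervalIntegrable _ volume 0 t := (hB.mono hsub).intervalIntegrable_of_Icc ht.1
  have iC : IntervalIntegrable _ volume 0 t := (hC.mono hsub).intervalIntegrable_of_Icc ht.1
  rw [hsol.2 t ht]
  simp only [sidField]
  rw [intervalIntegral.integral_add (iA.add iB) iC, intervalIntegral.integral_add iA iB]
  simp only [convMeasure, selfInteraction]
  abel

theorem IsSIDSolution.norm_sub_le_add_mul_integral (hsol₁ : IsSIDSolution V F T t₁ μ₀ x₁ g f₁)
    (hsol₂ : IsSIDSolution V F T t₂ μ₀ x₂ g f₂)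
    (hVlip : ∀ x y : Ed d, ‖gradient V x - gradient V y‖ ≤ LV * ‖x - y‖)
    (hFlip : ∀ x y : Ed d, ‖gradient F x - gradient F y‖ ≤ LF * ‖x - y‖) (hLF : 0 ≤ LF)
    (hFbdd : ∀ x : Ed d, ‖gradient F x‖ ≤ CF) (hτ : 0 < τ) (ht₁ : τ ≤ t₁) (ht₂ : τ ≤ t₂)
    {t : ℝ} (ht : t ∈ Icc 0 T) :
    ‖f₁ t - f₂ t‖ ≤ (‖x₁ - x₂‖ + 2 * CF * T ^ 2 / τ ^ 2 * |t₁ - t₂|)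
      + (LV + LF + 2 * LF * T / τ) * ∫ s in (0 : ℝ)..t, ‖f₁ s - f₂ s‖ := by
  have hV := continuous_of_norm_sub_le_mul hVlip
  have hCF : 0 ≤ CF := (norm_nonneg _).trans (hFbdd 0)
  set φ : ℝ → ℝ := fun r => ∫ s in (0 : ℝ)..r, ‖f₁ s - f₂ s‖
  have hsub : Icc 0 t ⊆ Icc 0 T := Icc_subset_Icc_right ht.2
  have hh : IntervalIntegrable (fun s => ‖f₁ s - f₂ s‖) volume 0 t :=
    ((hsol₁.1.sub hsol₂.1).norm.mono hsub).intervalIntegrable_of_Icc ht.1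
  have hφ : ∀ r ∈ Icc 0 t, φ r ≤ φ t := fun r hr =>
    intervalIntegral.integral_mono_interval le_rfl hr.1 hr.2
      (Filter.Eventually.of_forall fun _ => norm_nonneg _) hh
  have hpt : ∀ s ∈ Icc 0 t,
      ‖sidField (gradient V) (gradient F) t₁ μ₀ f₁ s
          - sidField (gradient V) (gradient F) t₂ μ₀ f₂ s‖
        ≤ (LV + LF + LF * T / τ) * ‖f₁ s - f₂ s‖ + LF / τ * φ t
          + 2 * CF * T / τ ^ 2 * |t₁ - t₂| := by
    intro s hs
    have hsT : s ≤ T := hs.2.trans ht.2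
    refine (norm_sidField_sub_le μ₀ hVlip hFlip hLF hFbdd hτ ht₁ ht₂ hs.1
      (hsol₁.1.mono (Icc_subset_Icc_right hsT)) (hsol₂.1.mono (Icc_subset_Icc_right hsT))).trans ?_
    have := hφ s hs
    gcongr
  have hF₁ : IntervalIntegrable (sidField (gradient V) (gradient F) t₁ μ₀ f₁) volume 0 t :=
    ((continuousOn_sidField μ₀ hV hFlip hFbdd (hτ.trans_le ht₁) hsol₁.1).mono
      hsub).intervalIntegrable_of_Icc ht.1
  have hF₂ : IntervalIntegrable (sidField (gradient V) (gradient F) t₂ μ₀ f₂) volume 0 t :=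
    ((continuousOn_sidField μ₀ hV hFlip hFbdd (hτ.trans_le ht₂) hsol₂.1).mono
      hsub).intervalIntegrable_of_Icc ht.1
  have hdiff : f₁ t - f₂ t = (x₁ - x₂) - ∫ s in (0 : ℝ)..t,
      (sidField (gradient V) (gradient F) t₁ μ₀ f₁ s
        - sidField (gradient V) (gradient F) t₂ μ₀ f₂ s) := by
    rw [hsol₁.eq_sub_integral_sidField hV hFlip hFbdd (hτ.trans_le ht₁) ht,
      hsol₂.eq_sub_integral_sidField hV hFlip hFbdd (hτ.trans_le ht₂) ht,
      intervalIntegral.integral_sub hF₁ hF₂]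
    abel
  have hφt : 0 ≤ φ t := intervalIntegral.integral_nonneg ht.1 fun _ _ => norm_nonneg _
  calc ‖f₁ t - f₂ t‖
      ≤ ‖x₁ - x₂‖ + ((LV + LF + LF * T / τ) * φ t
          + (LF / τ * φ t + 2 * CF * T / τ ^ 2 * |t₁ - t₂|) * (t - 0)) := by
        rw [hdiff]
        refine (norm_sub_le _ _).trans (add_le_add_right ?_ _)
        exact norm_intervalIntegral_le_mul_integral_add ht.1 hh fun s hs =>
          (hpt s hs).trans_eq (add_assoc _ _ _)
    _ ≤ ‖x₁ - x₂‖ + ((LV + LF + LF * T / τ) * φ t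
          + (LF / τ * φ t + 2 * CF * T / τ ^ 2 * |t₁ - t₂|) * T) := by
        have hT : 0 ≤ T := ht.1.trans ht.2
        gcongr
        linarith [ht.2]
    _ = _ := by ring

end Solutions

theorem stmt3_general {d : ℕ} (V F : Ed d → ℝ) (LV LF CF : ℝ) (hLV : 0 ≤ LV) (hLF : 0 ≤ LF)
    (hVlip : ∀ x y : Ed d, ‖gradient V x - gradient V y‖ ≤ LV * ‖x - y‖)
    (hFlip : ∀ x y : Ed d, ‖gradient F x - gradient F y‖ ≤ LF * ‖x - y‖)
    (hFbdd : ∀ x : Ed d, ‖gradient F x‖ ≤ CF)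
    (T : ℝ) (τ : ℝ) (hτ : 0 < τ) :
    ∃ C > (0:ℝ),
      ∀ μ₀ : Measure (Ed d), IsProbabilityMeasure μ₀ →
        Integrable (fun u => ‖u‖) μ₀ →
      ∀ g : ℝ → Ed d, ContinuousOn g (Icc 0 T) → g 0 = 0 →
      ∀ t₁ t₂ : ℝ, τ ≤ t₁ → τ ≤ t₂ →
      ∀ x₁ x₂ : Ed d, ∀ f₁ f₂ : ℝ → Ed d,
        IsSIDSolution V F T t₁ μ₀ x₁ g f₁ →
        IsSIDSolution V F T t₂ μ₀ x₂ g f₂ →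
        ∀ t ∈ Icc (0:ℝ) T, ‖f₁ t - f₂ t‖ ≤ C * (‖x₁ - x₂‖ + |t₁ - t₂|) := by
  have hCF : 0 ≤ CF := (norm_nonneg _).trans (hFbdd 0)
  set M := 2 * CF * T ^ 2 / τ ^ 2
  set K := LV + LF + 2 * LF * T / τ
  refine ⟨(1 + M) * Real.exp (K * T), by positivity, ?_⟩
  intro μ₀ _ _ g _ _ t₁ t₂ ht₁ ht₂ x₁ x₂ f₁ f₂ hsol₁ hsol₂ t ht
  have hT : 0 ≤ T := ht.1.trans ht.2
  have hgronwall := le_mul_exp_of_le_add_mul_integral (hsol₁.1.sub hsol₂.1).norm (by positivity)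
    (fun s hs => hsol₁.norm_sub_le_add_mul_integral hsol₂ hVlip hFlip hLF hFbdd hτ ht₁ ht₂ hs) t ht
  calc ‖f₁ t - f₂ t‖ ≤ (‖x₁ - x₂‖ + M * |t₁ - t₂|) * Real.exp (K * (t - 0)) := hgronwall
    _ ≤ (1 + M) * (‖x₁ - x₂‖ + |t₁ - t₂|) * Real.exp (K * T) := by
        gcongr
        · have hM : 0 ≤ M := by positivity
          nlinarith [norm_nonneg (x₁ - x₂), abs_nonneg (t₁ - t₂)]
        · linarith [ht.2]
    _ = (1 + M) * Real.exp (K * T) * (‖x₁ - x₂‖ + |t₁ - t₂|) := by ring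

/-- Lipschitz dependence of the solution on the starting point `x` and the
past-time `t₀`, uniformly over `t₀ ≥ τ`; the constant `C` depends only on
`L_V, L_F, C_F, T, τ`. -/
theorem stmt3 {d : ℕ} (hd : 1 ≤ d)
    (V F : Ed d → ℝ) (hV : ContDiff ℝ 2 V) (hF : ContDiff ℝ 2 F)
    (LV LF CF : ℝ) (hLV : 0 ≤ LV) (hLF : 0 ≤ LF) (hCF : 0 < CF)
    (hVlip : ∀ x y : Ed d, ‖gradient V x - gradient V y‖ ≤ LV * ‖x - y‖)
    (hFlip : ∀ x y : Ed d, ‖gradient F x - gradient F y‖ ≤ LF * ‖x - y‖)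
    (hFbdd : ∀ x : Ed d, ‖gradient F x‖ ≤ CF)
    (T : ℝ) (hT : 0 < T) (τ : ℝ) (hτ : 0 < τ) :
    ∃ C > (0:ℝ),
      ∀ μ₀ : Measure (Ed d), IsProbabilityMeasure μ₀ →
        Integrable (fun u => ‖u‖) μ₀ →
      ∀ g : ℝ → Ed d, ContinuousOn g (Icc 0 T) → g 0 = 0 →
      ∀ t₁ t₂ : ℝ, τ ≤ t₁ → τ ≤ t₂ →
      ∀ x₁ x₂ : Ed d, ∀ f₁ f₂ : ℝ → Ed d,
        IsSIDSolution V F T t₁ μ₀ x₁ g f₁ →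
        IsSIDSolution V F T t₂ μ₀ x₂ g f₂ →
        ∀ t ∈ Icc (0:ℝ) T, ‖f₁ t - f₂ t‖ ≤ C * (‖x₁ - x₂‖ + |t₁ - t₂|) :=
  stmt3_general V F LV LF CF hLV hLF hVlip hFlip hFbdd T τ hτ
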